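/- Let f : A → A be a continuous map of degree d with |d| > 1, let F : Ã → Ã be a lift of f, let K ⊆ A be a nonempty compact set with f(K) ⊆ K, and set K̃ = π⁻¹(K) (so that F(K̃) ⊆ K̃). Then there exists a continuous map H : K̃ → ℝ such that: (1) H(z + 1) = H(z) + 1 for all z ∈ K̃; (2) H(F(z)) = d·H(z) for all z ∈ K̃; (3) the function (x,y) ↦ H(x,y) − x is bounded on K̃; (4) for every z ∈ K̃, H(z) = lim_{n→∞} (Fⁿ(z))₁ / dⁿ, where (·)₁ denotes the first coordinate. -/

import Mathlib

open Set Filter Topology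

noncomputable section

/-- The open annulus `A = S¹ × (0,1)`. -/
abbrev Ann : Type := Circle × (Set.Ioo (0:ℝ) 1)

/-- The universal cover `Ã = ℝ × (0,1)`. -/
abbrev AnnTil : Type := ℝ × (Set.Ioo (0:ℝ) 1)

/-- The covering projection `π(x,y) = (exp(2πix), y)`. -/
def pr : AnnTil → Ann := fun z => (Circle.exp (2 * Real.pi * z.1), z.2)

/-- Translation by an integer in the first coordinate: `z + k`. -/
def tr (z : AnnTil) (k : ℤ) : AnnTil := (z.1 + k, z.2)

/-- `F` is a lift of `f`. -/
def IsLift (f : Ann → Ann) (F : AnnTil → AnnTil) : Prop :=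
  Continuous F ∧ pr ∘ F = f ∘ pr

/-- `f` has degree `d`: some lift satisfies `F(z+1) = F(z) + d`. -/
def HasDegree (f : Ann → Ann) (d : ℤ) : Prop :=
  ∃ F : AnnTil → AnnTil, IsLift f F ∧ ∀ z, F (tr z 1) = tr (F z) d

/-- A subset of the annulus is essential if it is not contained in any
connected, simply connected open subset. -/
def IsEssential (K : Set Ann) : Prop :=
  ¬ ∃ U : Set Ann, IsOpen U ∧ IsConnected U ∧ SimplyConnectedSpace U ∧ K ⊆ U

/-- Nielsen equivalence of fixed points `p`, `q` of `g`: there is a path `γ`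
from `p` to `q` homotopic (rel endpoints) to `g ∘ γ`. -/
def NielsenEquiv (g : Ann → Ann) (p q : Ann) : Prop :=
  ∃ (hg : Continuous g) (hp : g p = p) (hq : g q = q) (γ : Path p q),
    γ.Homotopic ((γ.map hg).cast hp.symm hq.symm)

/-- `g` has exactly `N` Nielsen classes of fixed points. -/
def HasExactlyNielsenClasses (g : Ann → Ann) (N : ℕ) : Prop :=
  ∃ S : Finset Ann, S.card = N ∧ (∀ p ∈ S, g p = p) ∧
    (∀ p ∈ S, ∀ q ∈ S, p ≠ q → ¬ NielsenEquiv g p q) ∧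
    (∀ p, g p = p → ∃ q ∈ S, NielsenEquiv g p q)

/-- `Fill K`: the union of `K` with the connected components of its
complement whose closure is compact. -/
def Fill (K : Set Ann) : Set Ann :=
  K ∪ {x | x ∈ Kᶜ ∧ IsCompact (closure (connectedComponentIn Kᶜ x))}

/-!
The defect `z ↦ (F z)₁ - d z₁` is invariant under `z ↦ z + 1`, so it is bounded on `π⁻¹(K)`,
which has the compact fundamental domain `π⁻¹(K) ∩ [0,1] × (0,1)`. Hence consecutive terms of
`(Fⁿ z)₁ / dⁿ` differ by at most `M / |d|ⁿ⁺¹`: the sequence converges geometrically, uniformly on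
`π⁻¹(K)`, so its limit `H` is continuous, lies within `M / (|d| - 1)` of `z₁`, and inherits
`H ∘ F = d H` and `H (z + 1) = H z + 1` from the finite terms.
-/

section GrowthLimit

variable {X : Type*} {F : X → X} {p : X → ℝ} {d M : ℝ} {S : Set X}

/-- Junk (`limUnder`) unless the sequence converges; the lemmas below work on an `F`-invariant set
on which the defect `p ∘ F - d • p` is bounded. -/
def growthLimit (F : X → X) (p : X → ℝ) (d : ℝ) (z : X) : ℝ :=
  limUnder atTop fun n : ℕ => p (F^[n] z) / d ^ n

lemma dist_iterate_div_pow_succ_le (hS : MapsTo F S S)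
    (hM : ∀ z ∈ S, |p (F z) - d * p z| ≤ M) (hd : d ≠ 0) {z : X} (hz : z ∈ S) (n : ℕ) :
    dist (p (F^[n] z) / d ^ n) (p (F^[n + 1] z) / d ^ (n + 1)) ≤ M / |d| * |d|⁻¹ ^ n := by
  have hstep : p (F^[n + 1] z) / d ^ (n + 1) - p (F^[n] z) / d ^ n
      = (p (F (F^[n] z)) - d * p (F^[n] z)) / d ^ (n + 1) := by
    rw [Function.iterate_succ_apply']
    field_simp
    ring
  have hrhs : M / |d| * |d|⁻¹ ^ n = M / |d| ^ (n + 1) := by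
    rw [inv_pow, pow_succ]
    field_simp
  rw [dist_comm, Real.dist_eq, hstep, hrhs, abs_div, abs_pow]
  exact div_le_div_of_nonneg_right (hM _ (hS.iterate n hz)) (by positivity)

lemma cauchySeq_iterate_div_pow (hS : MapsTo F S S)
    (hM : ∀ z ∈ S, |p (F z) - d * p z| ≤ M) (hd : 1 < |d|) {z : X} (hz : z ∈ S) :
    CauchySeq fun n : ℕ => p (F^[n] z) / d ^ n :=
  cauchySeq_of_le_geometric _ _ (inv_lt_one_of_one_lt₀ hd)
    (dist_iterate_div_pow_succ_le hS hM (abs_pos.1 (one_pos.trans hd)) hz)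

lemma tendsto_growthLimit (hS : MapsTo F S S)
    (hM : ∀ z ∈ S, |p (F z) - d * p z| ≤ M) (hd : 1 < |d|) {z : X} (hz : z ∈ S) :
    Tendsto (fun n : ℕ => p (F^[n] z) / d ^ n) atTop (𝓝 (growthLimit F p d z)) :=
  (cauchySeq_iterate_div_pow hS hM hd hz).tendsto_limUnder

lemma dist_iterate_div_pow_growthLimit_le (hS : MapsTo F S S)
    (hM : ∀ z ∈ S, |p (F z) - d * p z| ≤ M) (hd : 1 < |d|) {z : X} (hz : z ∈ S) (n : ℕ) :
    dist (p (F^[n] z) / d ^ n) (growthLimit F p d z) ≤ M / |d| * |d|⁻¹ ^ n / (1 - |d|⁻¹) :=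
  dist_le_of_le_geometric_of_tendsto _ _ (inv_lt_one_of_one_lt₀ hd)
    (dist_iterate_div_pow_succ_le hS hM (abs_pos.1 (one_pos.trans hd)) hz)
    (tendsto_growthLimit hS hM hd hz) n

lemma abs_growthLimit_sub_le (hS : MapsTo F S S)
    (hM : ∀ z ∈ S, |p (F z) - d * p z| ≤ M) (hd : 1 < |d|) {z : X} (hz : z ∈ S) :
    |growthLimit F p d z - p z| ≤ M / (|d| - 1) := by
  have h := dist_iterate_div_pow_growthLimit_le hS hM hd hz 0
  have hconst : M / |d| * |d|⁻¹ ^ 0 / (1 - |d|⁻¹) = M / (|d| - 1) := by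
    have : |d| - 1 ≠ 0 := by linarith
    field_simp
  rwa [dist_comm, Real.dist_eq, hconst, Function.iterate_zero_apply, pow_zero, div_one] at h

lemma tendstoUniformlyOn_growthLimit (hS : MapsTo F S S)
    (hM : ∀ z ∈ S, |p (F z) - d * p z| ≤ M) (hd : 1 < |d|) :
    TendstoUniformlyOn (fun (n : ℕ) z => p (F^[n] z) / d ^ n) (growthLimit F p d) atTop S := by
  have hr : |d|⁻¹ < 1 := inv_lt_one_of_one_lt₀ hd
  have hbound : Tendsto (fun n : ℕ => M / |d| * |d|⁻¹ ^ n / (1 - |d|⁻¹)) atTop (𝓝 0) := by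
    simpa using ((tendsto_pow_atTop_nhds_zero_of_lt_one (by positivity) hr).const_mul
      (M / |d|)).div_const (1 - |d|⁻¹)
  refine Metric.tendstoUniformlyOn_iff.2 fun ε hε => ?_
  filter_upwards [hbound.eventually (gt_mem_nhds hε)] with n hn z hz
  rw [dist_comm]
  exact (dist_iterate_div_pow_growthLimit_le hS hM hd hz n).trans_lt hn

lemma continuousOn_growthLimit [TopologicalSpace X] (hF : Continuous F) (hp : Continuous p)
    (hS : MapsTo F S S) (hM : ∀ z ∈ S, |p (F z) - d * p z| ≤ M) (hd : 1 < |d|) :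
    ContinuousOn (growthLimit F p d) S :=
  (tendstoUniformlyOn_growthLimit hS hM hd).continuousOn <| Frequently.of_forall fun n =>
    ((hp.comp (hF.iterate n)).div_const _).continuousOn

lemma growthLimit_apply (hS : MapsTo F S S)
    (hM : ∀ z ∈ S, |p (F z) - d * p z| ≤ M) (hd : 1 < |d|) {z : X} (hz : z ∈ S) :
    growthLimit F p d (F z) = d * growthLimit F p d z := by
  have hd0 : d ≠ 0 := abs_pos.1 (one_pos.trans hd)
  have hshift : Tendsto (fun n : ℕ => d * (p (F^[n + 1] z) / d ^ (n + 1))) atTop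
      (𝓝 (d * growthLimit F p d z)) :=
    ((tendsto_growthLimit hS hM hd hz).comp (tendsto_add_atTop_nat 1)).const_mul d
  refine tendsto_nhds_unique (tendsto_growthLimit hS hM hd (hS hz)) (hshift.congr fun n => ?_)
  rw [Function.iterate_succ_apply, pow_succ]
  field_simp

lemma growthLimit_eq_add (hS : MapsTo F S S)
    (hM : ∀ z ∈ S, |p (F z) - d * p z| ≤ M) (hd : 1 < |d|) {z w : X} (hz : z ∈ S) (hw : w ∈ S)
    {c : ℝ} (hzw : ∀ n : ℕ, p (F^[n] w) = p (F^[n] z) + c * d ^ n) :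
    growthLimit F p d w = growthLimit F p d z + c := by
  have hd0 : d ≠ 0 := abs_pos.1 (one_pos.trans hd)
  refine tendsto_nhds_unique (tendsto_growthLimit hS hM hd hw)
    (((tendsto_growthLimit hS hM hd hz).add_const c).congr fun n => ?_)
  rw [hzw]
  field_simp

end GrowthLimit

lemma tr_zero (z : AnnTil) : tr z 0 = z := by
  simp [tr]

lemma tr_tr (z : AnnTil) (a b : ℤ) : tr (tr z a) b = tr z (a + b) := by
  simp only [tr, Int.cast_add, add_assoc]

lemma pr_tr (z : AnnTil) (k : ℤ) : pr (tr z k) = pr z := by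
  refine Prod.ext ?_ rfl
  exact Circle.exp_eq_exp.2 ⟨k, by simp only [tr]; ring⟩

lemma continuous_pr : Continuous pr := by
  unfold pr
  fun_prop

lemma apply_tr_of_apply_tr_one {F : AnnTil → AnnTil} {d : ℤ}
    (hFdeg : ∀ z, F (tr z 1) = tr (F z) d) (z : AnnTil) (k : ℤ) :
    F (tr z k) = tr (F z) (d * k) := by
  induction k using Int.induction_on generalizing z with
  | zero => simp [tr]
  | succ n ih => rw [← tr_tr, hFdeg, ih, tr_tr, mul_add_one]
  | pred n ih =>
    have h := hFdeg (tr z (-n - 1))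
    rw [tr_tr, sub_add_cancel, ih] at h
    calc F (tr z (-n - 1)) = tr (tr (F (tr z (-n - 1))) d) (-d) := by
          rw [tr_tr, add_neg_cancel, tr_zero]
      _ = tr (F z) (d * (-n - 1)) := by
          rw [← h, tr_tr]
          ring_nf

lemma iterate_apply_tr {F : AnnTil → AnnTil} {d : ℤ}
    (hFdeg : ∀ z, F (tr z 1) = tr (F z) d) (n : ℕ) (z : AnnTil) (k : ℤ) :
    F^[n] (tr z k) = tr (F^[n] z) (d ^ n * k) := by
  induction n with
  | zero => simp
  | succ n ih =>
    rw [Function.iterate_succ_apply', ih, apply_tr_of_apply_tr_one hFdeg,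
      Function.iterate_succ_apply', pow_succ, mul_right_comm, mul_comm d]

lemma fst_apply_sub_mul_fst_tr {F : AnnTil → AnnTil} {d : ℤ}
    (hFdeg : ∀ z, F (tr z 1) = tr (F z) d) (z : AnnTil) (k : ℤ) :
    (F (tr z k)).1 - d * (tr z k).1 = (F z).1 - d * z.1 := by
  rw [apply_tr_of_apply_tr_one hFdeg]
  simp only [tr]
  push_cast
  ring

lemma exists_bound_on_preimage_pr_of_periodic {g : AnnTil → ℝ} (hg : Continuous g)
    (hper : ∀ z (k : ℤ), g (tr z k) = g z) {K : Set Ann} (hK : IsCompact K) :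
    ∃ M, ∀ z ∈ pr ⁻¹' K, |g z| ≤ M := by
  set D : Set AnnTil := Prod.fst ⁻¹' Icc 0 1 ∩ pr ⁻¹' K
  have hD : IsCompact D :=
    (isCompact_Icc.prod (hK.image continuous_snd)).of_isClosed_subset
      ((isClosed_Icc.preimage continuous_fst).inter (hK.isClosed.preimage continuous_pr))
      fun z hz => ⟨hz.1, pr z, hz.2, rfl⟩
  obtain ⟨M, hM⟩ := hD.exists_bound_of_continuousOn hg.continuousOn
  refine ⟨M, fun z hz => ?_⟩
  have hzD : tr z (-⌊z.1⌋) ∈ D := by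
    refine ⟨?_, by rwa [mem_preimage, pr_tr]⟩
    simp only [tr, mem_preimage, mem_Icc, Int.cast_neg]
    constructor <;> linarith [Int.floor_le z.1, Int.lt_floor_add_one z.1]
  simpa [hper] using hM _ hzD

lemma IsLift.mapsTo_preimage_pr {f : Ann → Ann} {F : AnnTil → AnnTil} (hF : IsLift f F)
    {K : Set Ann} (hK : MapsTo f K K) : MapsTo F (pr ⁻¹' K) (pr ⁻¹' K) := fun z hz => by
  rw [mem_preimage, ← Function.comp_apply (f := pr), hF.2]
  exact hK hz

theorem stmt_11_general (f : Ann → Ann) (d : ℤ) (hd : 1 < |d|)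
    (F : AnnTil → AnnTil) (hF : IsLift f F)
    (hFdeg : ∀ z : AnnTil, F (tr z 1) = tr (F z) d)
    (K : Set Ann) (hKc : IsCompact K)
    (hKinv : f '' K ⊆ K) :
    ∃ H : AnnTil → ℝ, ContinuousOn H (pr ⁻¹' K) ∧
      (∀ z ∈ pr ⁻¹' K, H (tr z 1) = H z + 1) ∧
      (∀ z ∈ pr ⁻¹' K, H (F z) = d * H z) ∧
      (∃ C : ℝ, ∀ z ∈ pr ⁻¹' K, |H z - z.1| ≤ C) ∧
      (∀ z ∈ pr ⁻¹' K, Filter.Tendsto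
        (fun n : ℕ => (F^[n] z).1 / (d : ℝ) ^ n) Filter.atTop (nhds (H z))) := by
  have hdR : 1 < |(d : ℝ)| := by exact_mod_cast hd
  have hS := hF.mapsTo_preimage_pr (mapsTo_iff_image_subset.2 hKinv)
  obtain ⟨M, hM⟩ := exists_bound_on_preimage_pr_of_periodic
    ((continuous_fst.comp hF.1).sub (continuous_const.mul continuous_fst))
    (fst_apply_sub_mul_fst_tr hFdeg) hKc
  refine ⟨growthLimit F Prod.fst d, continuousOn_growthLimit hF.1 continuous_fst hS hM hdR,
    fun z hz => ?_, fun z hz => growthLimit_apply hS hM hdR hz,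
    ⟨M / (|(d : ℝ)| - 1), fun z hz => abs_growthLimit_sub_le hS hM hdR hz⟩,
    fun z hz => tendsto_growthLimit hS hM hdR hz⟩
  refine growthLimit_eq_add hS hM hdR hz (by rwa [mem_preimage, pr_tr]) fun n => ?_
  rw [iterate_apply_tr hFdeg]
  simp [tr]

/-- The semiconjugacy lemma: existence of the function `H` on `π⁻¹(K)`. -/
theorem stmt_11 (f : Ann → Ann) (hf : Continuous f) (d : ℤ)
    (hdeg : HasDegree f d) (hd : 1 < |d|)
    (F : AnnTil → AnnTil) (hF : IsLift f F)
    (hFdeg : ∀ z : AnnTil, F (tr z 1) = tr (F z) d)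
    (K : Set Ann) (hKne : K.Nonempty) (hKc : IsCompact K)
    (hKinv : f '' K ⊆ K) :
    ∃ H : AnnTil → ℝ, ContinuousOn H (pr ⁻¹' K) ∧
      (∀ z ∈ pr ⁻¹' K, H (tr z 1) = H z + 1) ∧
      (∀ z ∈ pr ⁻¹' K, H (F z) = d * H z) ∧
      (∃ C : ℝ, ∀ z ∈ pr ⁻¹' K, |H z - z.1| ≤ C) ∧
      (∀ z ∈ pr ⁻¹' K, Filter.Tendsto
        (fun n : ℕ => (F^[n] z).1 / (d : ℝ) ^ n) Filter.atTop (nhds (H z))) :=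
  stmt_11_general f d hd F hF hFdeg K hKc hKinv
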